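/- Let (α_t)_{t∈[0,1)} be a family of orientation-preserving C^1 diffeomorphisms of [0,1] such that the family {log Dα_t} is equicontinuous on [0,1]. Then for every η > 0 there exists ε > 0 such that for every g ∈ Diff^1_+([0,1]) with ‖g − id‖₁ < ε, one has ‖α_t g α_t^{-1} − id‖₁ < η for all t ∈ [0,1). In particular, if g_t → id in the C^1 topology, then α_t g_t α_t^{-1} → id in the C^1 topology. -/

import Mathlib

open Set Filter

noncomputable section

/-- `f` is an orientation-preserving C¹ diffeomorphism of `[0,1]`, modeled as a
bijection of `ℝ` that equals the identity outside `[0,1]`. -/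
def DiffOnIcc (f : Equiv.Perm ℝ) : Prop :=
  (∀ x : ℝ, x ∉ Icc (0:ℝ) 1 → f x = x) ∧
  MapsTo ⇑f (Icc (0:ℝ) 1) (Icc (0:ℝ) 1) ∧
  StrictMonoOn ⇑f (Icc (0:ℝ) 1) ∧
  ContDiffOn ℝ 1 ⇑f (Icc (0:ℝ) 1) ∧
  ContDiffOn ℝ 1 ⇑f.symm (Icc (0:ℝ) 1) ∧
  ∀ x ∈ Icc (0:ℝ) 1, 0 < derivWithin ⇑f (Icc (0:ℝ) 1) x

/-- The derivative (within `[0,1]`) of a diffeomorphism of `[0,1]`. -/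
def D (f : Equiv.Perm ℝ) (x : ℝ) : ℝ := derivWithin ⇑f (Icc (0:ℝ) 1) x

/-- `f` is an orientation-preserving homeomorphism of `[0,1]`, modeled as a
bijection of `ℝ` that equals the identity outside `[0,1]`. -/
def HomeoOnIcc (f : Equiv.Perm ℝ) : Prop :=
  (∀ x : ℝ, x ∉ Icc (0:ℝ) 1 → f x = x) ∧
  MapsTo ⇑f (Icc (0:ℝ) 1) (Icc (0:ℝ) 1) ∧
  StrictMonoOn ⇑f (Icc (0:ℝ) 1) ∧
  ContinuousOn ⇑f (Icc (0:ℝ) 1)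

/-- `(a,b)` is a connected component of `[0,1] \ Fix f`: `a`, `b` are fixed and
there is no fixed point in between. -/
def IsCompFix (f : Equiv.Perm ℝ) (a b : ℝ) : Prop :=
  a ∈ Icc (0:ℝ) 1 ∧ b ∈ Icc (0:ℝ) 1 ∧ a < b ∧ f a = a ∧ f b = b ∧
  ∀ x ∈ Ioo a b, f x ≠ x

/-- `{a,b}` is a pair of successive fixed points of the group `G`. -/
def SuccFix (G : Subgroup (Equiv.Perm ℝ)) (a b : ℝ) : Prop :=
  ∃ g ∈ G, IsCompFix g a b

/-! With `y = α⁻¹ x`, the chain rule gives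
`log D(α g α⁻¹) x = (log Dα (g y) - log Dα y) + log Dg y`.
When `g` is C⁰-close to the identity the bracket is small by equicontinuity of `log Dα`,
uniformly in the parameter, and when `Dg` is close to `1` so is the last term. Hence
`D(α g α⁻¹)` is uniformly close to `1`, and since the conjugate fixes `0`, the mean value
inequality makes it C⁰-close to the identity as well. -/

lemma abs_sub_self_le_of_abs_derivWithin_sub_one_le {h : ℝ → ℝ} {a b C : ℝ}
    (hab : a < b) (hd : DifferentiableOn ℝ h (Icc a b)) (ha : h a = a)
    (hC : ∀ z ∈ Icc a b, |derivWithin h (Icc a b) z - 1| ≤ C) {x : ℝ} (hx : x ∈ Icc a b) :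
    |h x - x| ≤ C * (x - a) := by
  have hderiv : ∀ z ∈ Icc a b, ‖derivWithin (h - id) (Icc a b) z‖ ≤ C := by
    intro z hz
    have hsub := (hd z hz).hasDerivWithinAt.sub (hasDerivWithinAt_id (x := z) (s := Icc a b))
    rw [hsub.derivWithin (uniqueDiffOn_Icc hab z hz), Real.norm_eq_abs]
    exact hC z hz
  have hmvt := (convex_Icc a b).norm_image_sub_le_of_norm_derivWithin_le (f := h - id)
    (hd.sub differentiableOn_id) hderiv (left_mem_Icc.2 (hx.1.trans hx.2)) hx
  simpa [ha, Real.norm_eq_abs, abs_of_nonneg (sub_nonneg.2 hx.1)] using hmvt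

lemma exists_pos_abs_exp_sub_one_lt {η : ℝ} (hη : 0 < η) :
    ∃ c > 0, ∀ u : ℝ, |u| < c → |Real.exp u - 1| < η := by
  obtain ⟨c, hc, h⟩ :=
    Metric.continuousAt_iff.1 (Real.continuous_exp.continuousAt (x := 0)) η hη
  exact ⟨c, hc, fun u hu => by
    simpa [Real.dist_eq] using h (x := u) (by simpa [Real.dist_eq] using hu)⟩

lemma exists_pos_abs_log_lt {c : ℝ} (hc : 0 < c) :
    ∃ ε > 0, ∀ s : ℝ, |s - 1| < ε → |Real.log s| < c := by
  obtain ⟨ε, hε, h⟩ := Metric.continuousAt_iff.1 (Real.continuousAt_log one_ne_zero) c hc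
  exact ⟨ε, hε, fun s hs => by
    simpa [Real.dist_eq] using h (x := s) (by simpa [Real.dist_eq] using hs)⟩

namespace DiffOnIcc

variable {f β g : Equiv.Perm ℝ}

lemma mapsTo (hf : DiffOnIcc f) : MapsTo f (Icc 0 1) (Icc 0 1) :=
  hf.2.1

lemma mapsTo_symm (hf : DiffOnIcc f) : MapsTo f.symm (Icc 0 1) (Icc 0 1) := by
  intro x hx
  by_contra h
  have hfix : f (f.symm x) = f.symm x := hf.1 _ h
  rw [f.apply_symm_apply] at hfix
  exact h (hfix ▸ hx)

lemma map_zero (hf : DiffOnIcc f) : f 0 = 0 := by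
  have h0 : (0 : ℝ) ∈ Icc 0 1 := left_mem_Icc.2 zero_le_one
  have hw := hf.mapsTo_symm h0
  rcases hw.1.eq_or_lt with h | h
  · simpa using congrArg f h
  · have hlt := hf.2.2.1 h0 hw h
    rw [f.apply_symm_apply] at hlt
    linarith [(hf.mapsTo h0).1]

lemma symm_map_zero (hf : DiffOnIcc f) : f.symm 0 = 0 :=
  f.symm_apply_eq.2 hf.map_zero.symm

lemma differentiableOn (hf : DiffOnIcc f) : DifferentiableOn ℝ f (Icc 0 1) :=
  hf.2.2.2.1.differentiableOn one_ne_zero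

lemma differentiableOn_symm (hf : DiffOnIcc f) : DifferentiableOn ℝ f.symm (Icc 0 1) :=
  hf.2.2.2.2.1.differentiableOn one_ne_zero

lemma D_pos (hf : DiffOnIcc f) {x : ℝ} (hx : x ∈ Icc 0 1) : 0 < D f x :=
  hf.2.2.2.2.2 x hx

lemma D_symm (hf : DiffOnIcc f) {x : ℝ} (hx : x ∈ Icc 0 1) :
    D f.symm x = (D f (f.symm x))⁻¹ := by
  have hchain : derivWithin (f ∘ f.symm) (Icc 0 1) x = D f (f.symm x) * D f.symm x :=
    derivWithin_comp x (hf.differentiableOn _ (hf.mapsTo_symm hx))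
      (hf.differentiableOn_symm x hx) hf.mapsTo_symm
  rw [f.self_comp_symm, derivWithin_id x _ (uniqueDiffOn_Icc one_pos x hx)] at hchain
  exact (inv_eq_of_mul_eq_one_right hchain.symm).symm

lemma coe_conj (β g : Equiv.Perm ℝ) : ⇑(β * g * β⁻¹) = β ∘ g ∘ β.symm := rfl

lemma differentiableOn_conj (hβ : DiffOnIcc β) (hg : DiffOnIcc g) :
    DifferentiableOn ℝ (β * g * β⁻¹) (Icc 0 1) :=
  hβ.differentiableOn.comp (hg.differentiableOn.comp hβ.differentiableOn_symm hβ.mapsTo_symm)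
    (hg.mapsTo.comp hβ.mapsTo_symm)

lemma D_conj (hβ : DiffOnIcc β) (hg : DiffOnIcc g) {x : ℝ} (hx : x ∈ Icc 0 1) :
    D (β * g * β⁻¹) x = D β (g (β.symm x)) * D g (β.symm x) / D β (β.symm x) := by
  have hy := hβ.mapsTo_symm hx
  have hinner : derivWithin (g ∘ β.symm) (Icc 0 1) x = D g (β.symm x) * D β.symm x :=
    derivWithin_comp x (hg.differentiableOn _ hy) (hβ.differentiableOn_symm x hx)
      hβ.mapsTo_symm
  have houter : derivWithin (β ∘ g ∘ β.symm) (Icc 0 1) x =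
      D β (g (β.symm x)) * derivWithin (g ∘ β.symm) (Icc 0 1) x :=
    derivWithin_comp x (hβ.differentiableOn _ (hg.mapsTo hy))
      (hg.differentiableOn.comp hβ.differentiableOn_symm hβ.mapsTo_symm x hx)
      (hg.mapsTo.comp hβ.mapsTo_symm)
  rw [D, coe_conj, houter, hinner, hβ.D_symm hx, div_eq_mul_inv, mul_assoc]

lemma D_conj_pos (hβ : DiffOnIcc β) (hg : DiffOnIcc g) {x : ℝ} (hx : x ∈ Icc 0 1) :
    0 < D (β * g * β⁻¹) x := by
  have hy := hβ.mapsTo_symm hx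
  rw [hβ.D_conj hg hx]
  exact div_pos (mul_pos (hβ.D_pos (hg.mapsTo hy)) (hg.D_pos hy)) (hβ.D_pos hy)

lemma log_D_conj (hβ : DiffOnIcc β) (hg : DiffOnIcc g) {x : ℝ} (hx : x ∈ Icc 0 1) :
    Real.log (D (β * g * β⁻¹) x) =
      (Real.log (D β (g (β.symm x))) - Real.log (D β (β.symm x))) +
        Real.log (D g (β.symm x)) := by
  have hy := hβ.mapsTo_symm hx
  rw [hβ.D_conj hg hx, Real.log_div (mul_pos (hβ.D_pos (hg.mapsTo hy)) (hg.D_pos hy)).ne'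
    (hβ.D_pos hy).ne', Real.log_mul (hβ.D_pos (hg.mapsTo hy)).ne' (hg.D_pos hy).ne']
  ring

end DiffOnIcc

lemma abs_log_D_conj_lt {β g : Equiv.Perm ℝ} (hβ : DiffOnIcc β) (hg : DiffOnIcc g)
    {δ a b : ℝ}
    (hβmod : ∀ x ∈ Icc (0:ℝ) 1, ∀ y ∈ Icc (0:ℝ) 1, |x - y| < δ →
      |Real.log (D β x) - Real.log (D β y)| < a)
    (hgC0 : ∀ y ∈ Icc (0:ℝ) 1, |g y - y| < δ)
    (hgD : ∀ y ∈ Icc (0:ℝ) 1, |Real.log (D g y)| < b)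
    {x : ℝ} (hx : x ∈ Icc 0 1) : |Real.log (D (β * g * β⁻¹) x)| < a + b := by
  have hy := hβ.mapsTo_symm hx
  rw [hβ.log_D_conj hg hx]
  exact (abs_add_le _ _).trans_lt
    (add_lt_add (hβmod _ (hg.mapsTo hy) _ hy (hgC0 _ hy)) (hgD _ hy))

lemma conj_C1_close_of_equicontinuous {ι : Type*} (α : ι → Equiv.Perm ℝ)
    (hα : ∀ i, DiffOnIcc (α i))
    (hequi : ∀ ε > (0:ℝ), ∃ δ > (0:ℝ), ∀ i, ∀ x ∈ Icc (0:ℝ) 1, ∀ y ∈ Icc (0:ℝ) 1,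
      |x - y| < δ → |Real.log (D (α i) x) - Real.log (D (α i) y)| < ε)
    {η : ℝ} (hη : 0 < η) :
    ∃ ε > (0:ℝ), ∀ g : Equiv.Perm ℝ, DiffOnIcc g →
      (∀ x ∈ Icc (0:ℝ) 1, |g x - x| < ε ∧ |D g x - 1| < ε) →
      ∀ i, ∀ x ∈ Icc (0:ℝ) 1,
        |(α i * g * (α i)⁻¹) x - x| < η ∧ |D (α i * g * (α i)⁻¹) x - 1| < η := by
  obtain ⟨c, hc, hexp⟩ := exists_pos_abs_exp_sub_one_lt (half_pos hη)
  obtain ⟨δ, hδ, hmod⟩ := hequi (c / 2) (half_pos hc)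
  obtain ⟨ε, hε, hlog⟩ := exists_pos_abs_log_lt (half_pos hc)
  refine ⟨min δ ε, lt_min hδ hε, fun g hg hgclose i x hx => ?_⟩
  have hD : ∀ z ∈ Icc (0:ℝ) 1, |D (α i * g * (α i)⁻¹) z - 1| ≤ η / 2 := fun z hz => by
    have hlogD := abs_log_D_conj_lt (hα i) hg (hmod i)
      (fun y hy => (hgclose y hy).1.trans_le (min_le_left _ _))
      (fun y hy => hlog _ ((hgclose y hy).2.trans_le (min_le_right _ _))) hz
    rw [← Real.exp_log ((hα i).D_conj_pos hg hz)]
    exact (hexp _ (by linarith)).le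
  have hfix : (α i * g * (α i)⁻¹) 0 = 0 := by
    simp [Equiv.Perm.mul_apply, (hα i).symm_map_zero, hg.map_zero, (hα i).map_zero]
  have hC0 := abs_sub_self_le_of_abs_derivWithin_sub_one_le one_pos
    ((hα i).differentiableOn_conj hg) hfix hD hx
  exact ⟨by nlinarith [hx.2], by linarith [hD x hx]⟩

/-- conjugating by a family of diffeomorphisms with equicontinuous
log-derivative keeps maps C¹-close to the identity, uniformly in the parameter. -/
theorem stmt17 (α : ℝ → Equiv.Perm ℝ) (hα : ∀ t ∈ Ico (0:ℝ) 1, DiffOnIcc (α t))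
    (hequi : ∀ ε > (0:ℝ), ∃ δ > (0:ℝ), ∀ t ∈ Ico (0:ℝ) 1,
      ∀ x ∈ Icc (0:ℝ) 1, ∀ y ∈ Icc (0:ℝ) 1, |x - y| < δ →
        |Real.log (D (α t) x) - Real.log (D (α t) y)| < ε) :
    (∀ η > (0:ℝ), ∃ ε > (0:ℝ), ∀ g : Equiv.Perm ℝ, DiffOnIcc g →
      (∀ x ∈ Icc (0:ℝ) 1, |g x - x| < ε ∧ |D g x - 1| < ε) →
      ∀ t ∈ Ico (0:ℝ) 1, ∀ x ∈ Icc (0:ℝ) 1,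
        |(α t * g * (α t)⁻¹) x - x| < η ∧ |D (α t * g * (α t)⁻¹) x - 1| < η) ∧
    (∀ g : ℝ → Equiv.Perm ℝ, (∀ t ∈ Ico (0:ℝ) 1, DiffOnIcc (g t)) →
      (∀ ε > (0:ℝ), ∃ t₀ ∈ Ico (0:ℝ) 1, ∀ t ∈ Ico (0:ℝ) 1, t₀ ≤ t →
        ∀ x ∈ Icc (0:ℝ) 1, |g t x - x| < ε ∧ |D (g t) x - 1| < ε) →
      ∀ ε > (0:ℝ), ∃ t₀ ∈ Ico (0:ℝ) 1, ∀ t ∈ Ico (0:ℝ) 1, t₀ ≤ t →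
        ∀ x ∈ Icc (0:ℝ) 1, |(α t * g t * (α t)⁻¹) x - x| < ε ∧
          |D (α t * g t * (α t)⁻¹) x - 1| < ε) := by
  have uniform : ∀ η > (0:ℝ), ∃ ε > (0:ℝ), ∀ g : Equiv.Perm ℝ, DiffOnIcc g →
      (∀ x ∈ Icc (0:ℝ) 1, |g x - x| < ε ∧ |D g x - 1| < ε) →
      ∀ t ∈ Ico (0:ℝ) 1, ∀ x ∈ Icc (0:ℝ) 1,
        |(α t * g * (α t)⁻¹) x - x| < η ∧ |D (α t * g * (α t)⁻¹) x - 1| < η := by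
    intro η hη
    have hequi' : ∀ ε > (0:ℝ), ∃ δ > (0:ℝ), ∀ t : Ico (0:ℝ) 1, ∀ x ∈ Icc (0:ℝ) 1,
        ∀ y ∈ Icc (0:ℝ) 1, |x - y| < δ → |Real.log (D (α t) x) - Real.log (D (α t) y)| < ε :=
      fun ε hε => let ⟨δ, hδ, h⟩ := hequi ε hε; ⟨δ, hδ, fun t => h t t.2⟩
    obtain ⟨ε, hε, h⟩ := conj_C1_close_of_equicontinuous (fun t : Ico (0:ℝ) 1 => α t)
      (fun t => hα t t.2) hequi' hη
    exact ⟨ε, hε, fun g hg hgclose t ht => h g hg hgclose ⟨t, ht⟩⟩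
  refine ⟨uniform, fun g hg hconv η hη => ?_⟩
  obtain ⟨ε, hε, h⟩ := uniform η hη
  obtain ⟨t₀, ht₀, hclose⟩ := hconv ε hε
  exact ⟨t₀, ht₀, fun t ht ht₀t => h (g t) (hg t ht) (hclose t ht ht₀t) t ht⟩
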